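/- Define I_n(a,b,c,d) = Σ_{P ∈ M_n} a^{hor(P)} b^{up(P)} c^{sh_u(P)} d^{sh_h(P)}, the joint distribution polynomial over Motzkin paths of length n. Then I_0(a,b,c,d) = 1 and, for n ≥ 1, I_n(a,b,c,d) = a·I_{n-1}(a,b,c,d) + b·Σ_{k=2}^{n} I_{k-2}(ad, bc, c, d)·I_{n-k}(a,b,c,d). -/

import Mathlib

/-- Steps of a Motzkin path: up, horizontal, down. -/
inductive MStep : Type
  | U | H | D
deriving DecidableEq

instance : Fintype MStep :=
  ⟨{MStep.U, MStep.H, MStep.D}, fun x => by cases x <;> simp⟩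

/-- The height of the `i`-th step of `P` (the `y`-coordinate of its starting point),
i.e. the number of up steps minus the number of down steps among the first `i` steps. -/
def stepHeight (P : List MStep) (i : ℕ) : ℕ :=
  (P.take i).count MStep.U - (P.take i).count MStep.D

/-- `P` is a Motzkin path: every prefix has at least as many up steps as down steps,
and the whole word has equally many up and down steps. -/
def IsMotzkin (P : List MStep) : Prop :=
  (∀ i ≤ P.length, (P.take i).count MStep.D ≤ (P.take i).count MStep.U) ∧
    P.count MStep.D = P.count MStep.U

def upCount (P : List MStep) : ℕ := P.count MStep.U
def horCount (P : List MStep) : ℕ := P.count MStep.H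
def downCount (P : List MStep) : ℕ := P.count MStep.D

/-- Sum of the heights of all steps of `P` equal to `s`. -/
def shSum (s : MStep) (P : List MStep) : ℕ :=
  ∑ i ∈ Finset.range P.length, if P.getD i MStep.H = s then stepHeight P i else 0

/-- The area between a Motzkin path and the x-axis (sum over steps of the
average of the heights of the two endpoints of the step). -/
def area (P : List MStep) : ℕ :=
  (∑ i ∈ Finset.range P.length, (stepHeight P i + stepHeight P (i + 1))) / 2

open Classical in
/-- The finite set of Motzkin paths of length `n`. -/
noncomputable def motzkinSet (n : ℕ) : Finset (List MStep) :=
  ((Finset.univ : Finset (Fin n → MStep)).image fun f => List.ofFn f).filter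
    fun P => IsMotzkin P

/-- The joint distribution polynomial
`I n a b c d = ∑_{P ∈ M_n} a^{hor P} b^{up P} c^{sh_u P} d^{sh_h P}`. -/
noncomputable def Ipoly {R : Type*} [CommSemiring R] (n : ℕ) (a b c d : R) : R :=
  ∑ P ∈ motzkinSet n,
    a ^ horCount P * b ^ upCount P * c ^ shSum MStep.U P * d ^ shSum MStep.H P

/-!
A nonempty Motzkin path either starts with a horizontal step, `P = H Q`, or splits at its first
return to the axis as `P = U Q D S` with `Q` and `S` Motzkin paths, and this splitting is unique.
In the first case the weight of `P` is `a` times that of `Q`. In the second case the new up step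
contributes `b`, `S` keeps its weight, and every step of `Q` is lifted by one: each up step of `Q`
gains a factor `c` and each horizontal step a factor `d`, which is the substitution
`(a, b) ↦ (a d, b c)` in the weight of `Q`.
-/

lemma mem_motzkinSet {n : ℕ} {P : List MStep} :
    P ∈ motzkinSet n ↔ P.length = n ∧ IsMotzkin P := by
  classical
  simp only [motzkinSet, Finset.mem_filter, Finset.mem_image, Finset.mem_univ, true_and]
  constructor
  · rintro ⟨⟨f, rfl⟩, hP⟩
    exact ⟨List.length_ofFn, hP⟩
  · rintro ⟨rfl, hP⟩
    exact ⟨⟨P.get, List.ofFn_get P⟩, hP⟩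

lemma motzkinSet_zero : motzkinSet 0 = {[]} := by
  ext P
  rw [mem_motzkinSet, Finset.mem_singleton, List.length_eq_zero_iff]
  refine ⟨And.left, ?_⟩
  rintro rfl
  exact ⟨rfl, fun i _ => by simp, rfl⟩

lemma count_eq_sum_getD (s : MStep) (L : List MStep) :
    L.count s = ∑ i ∈ Finset.range L.length, if L.getD i MStep.H = s then 1 else 0 := by
  induction L with
  | nil => simp
  | cons x L ih =>
    rw [List.length_cons, Finset.sum_range_succ', List.count_cons, ih]
    simp only [List.getD_cons_succ, List.getD_cons_zero, beq_iff_eq]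

lemma stepHeight_zero (P : List MStep) : stepHeight P 0 = 0 := by
  simp [stepHeight]

lemma stepHeight_cons_H (P : List MStep) (i : ℕ) :
    stepHeight (MStep.H :: P) (i + 1) = stepHeight P i := by
  simp [stepHeight]

lemma shSum_cons_H (s : MStep) (P : List MStep) : shSum s (MStep.H :: P) = shSum s P := by
  rw [shSum, List.length_cons, Finset.sum_range_succ']
  simp [stepHeight_cons_H, stepHeight_zero, shSum]

lemma isMotzkin_cons_H_iff {P : List MStep} : IsMotzkin (MStep.H :: P) ↔ IsMotzkin P := by
  simp only [IsMotzkin, List.length_cons, List.count_cons]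
  refine and_congr ⟨fun h i hi => by simpa using h (i + 1) (by omega), fun h i hi => ?_⟩ (by simp)
  rcases i with _ | i
  · simp
  · simpa using h i (by omega)

lemma not_isMotzkin_cons_D (P : List MStep) : ¬ IsMotzkin (MStep.D :: P) := fun h => by
  simpa using h.1 1 (by simp)

def firstReturn (Q S : List MStep) : List MStep := MStep.U :: (Q ++ MStep.D :: S)

section firstReturn

variable {Q S : List MStep}

lemma length_firstReturn : (firstReturn Q S).length = Q.length + 1 + 1 + S.length := by
  simp only [firstReturn, List.length_cons, List.length_append]
  omega

lemma take_firstReturn_succ {i : ℕ} (hi : i ≤ Q.length) :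
    (firstReturn Q S).take (i + 1) = MStep.U :: Q.take i := by
  rw [firstReturn, List.take_succ_cons, List.take_append_of_le_length hi]

lemma take_firstReturn_add (i : ℕ) :
    (firstReturn Q S).take (Q.length + 1 + 1 + i) = MStep.U :: (Q ++ MStep.D :: S.take i) := by
  rw [show Q.length + 1 + 1 + i = Q.length + (i + 1) + 1 by omega, firstReturn,
    List.take_succ_cons, List.take_append]
  simp

lemma stepHeight_firstReturn_succ (hQ : IsMotzkin Q) {i : ℕ} (hi : i ≤ Q.length) :
    stepHeight (firstReturn Q S) (i + 1) = stepHeight Q i + 1 := by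
  have := hQ.1 i hi
  simp only [stepHeight, take_firstReturn_succ hi, List.count_cons_self, List.count_cons_of_ne, ne_eq, reduceCtorEq, not_false_eq_true]
  omega

lemma stepHeight_firstReturn_add (hQ : IsMotzkin Q) (i : ℕ) :
    stepHeight (firstReturn Q S) (Q.length + 1 + 1 + i) = stepHeight S i := by
  have := hQ.2
  simp only [stepHeight, take_firstReturn_add, List.count_append, List.count_cons_self, List.count_cons_of_ne, ne_eq, reduceCtorEq, not_false_eq_true]
  omega

/-- Every step of `Q` is lifted by one; the outer `U` sits at height `0` and the outer `D` is
not counted since `s ≠ D`. -/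
lemma shSum_firstReturn (hQ : IsMotzkin Q) {s : MStep} (hs : s ≠ MStep.D) :
    shSum s (firstReturn Q S) = shSum s Q + Q.count s + shSum s S := by
  have hU : (firstReturn Q S).getD 0 MStep.H = MStep.U := rfl
  have hD : (firstReturn Q S).getD (Q.length + 1) MStep.H = MStep.D := by
    simp [firstReturn]
  have hmid : ∀ i ∈ Finset.range Q.length,
      (if (firstReturn Q S).getD (i + 1) MStep.H = s then stepHeight (firstReturn Q S) (i + 1)
        else 0) =
      (if Q.getD i MStep.H = s then stepHeight Q i else 0) +
        if Q.getD i MStep.H = s then 1 else 0 := by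
    intro i hi
    rw [Finset.mem_range] at hi
    rw [stepHeight_firstReturn_succ hQ hi.le, firstReturn, List.getD_cons_succ,
      List.getD_append _ _ _ _ hi]
    split_ifs <;> rfl
  have htop : ∀ i ∈ Finset.range S.length,
      (if (firstReturn Q S).getD (Q.length + 1 + 1 + i) MStep.H = s then
        stepHeight (firstReturn Q S) (Q.length + 1 + 1 + i) else 0) =
      if S.getD i MStep.H = s then stepHeight S i else 0 := by
    intro i _
    rw [stepHeight_firstReturn_add hQ, firstReturn, show Q.length + 1 + 1 + i =
      Q.length + 1 + i + 1 by omega, List.getD_cons_succ, List.getD_append_right _ _ _ _ (by omega),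
      show Q.length + 1 + i - Q.length = i + 1 by omega, List.getD_cons_succ]
  rw [shSum, length_firstReturn, Finset.sum_range_add, Finset.sum_range_succ,
    Finset.sum_range_succ', Finset.sum_congr rfl hmid, Finset.sum_congr rfl htop,
    Finset.sum_add_distrib, ← count_eq_sum_getD, hU, hD, stepHeight_zero]
  simp [hs.symm, shSum]

lemma isMotzkin_firstReturn_iff (hQ : IsMotzkin Q) :
    IsMotzkin (firstReturn Q S) ↔ IsMotzkin S := by
  have hbal := hQ.2
  constructor
  · rintro ⟨hpre, htot⟩
    simp only [firstReturn, List.count_append, List.count_cons_self, List.count_cons_of_ne, ne_eq, reduceCtorEq, not_false_eq_true] at htot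
    refine ⟨fun i hi => ?_, by omega⟩
    have := hpre (Q.length + 1 + 1 + i) (by rw [length_firstReturn]; omega)
    simp only [take_firstReturn_add, List.count_append, List.count_cons_self, List.count_cons_of_ne, ne_eq, reduceCtorEq, not_false_eq_true] at this
    omega
  · rintro ⟨hpre, htot⟩
    refine ⟨fun i hi => ?_, by simp only [firstReturn, List.count_append, List.count_cons_self, List.count_cons_of_ne, ne_eq, reduceCtorEq, not_false_eq_true]; omega⟩
    rw [length_firstReturn] at hi
    rcases i with _ | i
    · simp
    rcases le_or_gt i Q.length with hiQ | hiQ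
    · have := hQ.1 i hiQ
      simp only [take_firstReturn_succ hiQ, List.count_cons_self, List.count_cons_of_ne, ne_eq, reduceCtorEq, not_false_eq_true]
      omega
    · obtain ⟨j, rfl⟩ : ∃ j, i = Q.length + 1 + j := ⟨i - (Q.length + 1), by omega⟩
      have := hpre j (by omega)
      rw [show Q.length + 1 + j + 1 = Q.length + 1 + 1 + j by omega, take_firstReturn_add]
      simp only [List.count_append, List.count_cons_self, List.count_cons_of_ne, ne_eq, reduceCtorEq, not_false_eq_true]
      omega

/-- A Motzkin path `Q'` cannot have `Q D` as a prefix when `Q` is a Motzkin path. -/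
lemma length_le_of_append_cons_D_eq {Q' S' : List MStep} (hQ : IsMotzkin Q)
    (hQ' : IsMotzkin Q') (h : Q ++ MStep.D :: S = Q' ++ MStep.D :: S') :
    Q'.length ≤ Q.length := by
  by_contra! hlt
  have hprefix : Q'.take (Q.length + 1) = Q ++ [MStep.D] := by
    rw [← List.take_append_of_le_length (l₂ := MStep.D :: S') (by omega), ← h,
      List.take_append, List.take_of_length_le (by omega)]
    simp
  have hcount := hQ'.1 (Q.length + 1) (by omega)
  have := hQ.2
  simp only [hprefix, List.count_nil, List.count_append, List.count_cons_self, List.count_cons_of_ne, ne_eq, reduceCtorEq, not_false_eq_true] at hcount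
  omega

lemma firstReturn_inj {Q' S' : List MStep} (hQ : IsMotzkin Q) (hQ' : IsMotzkin Q')
    (h : firstReturn Q S = firstReturn Q' S') : Q = Q' ∧ S = S' := by
  simp only [firstReturn, List.cons.injEq, true_and] at h
  have hlen := (length_le_of_append_cons_D_eq hQ hQ' h).antisymm
    (length_le_of_append_cons_D_eq hQ' hQ h.symm)
  obtain ⟨hQQ', hSS'⟩ := List.append_inj h hlen.symm
  exact ⟨hQQ', List.cons_injective hSS'⟩

/-- Split a word at the first prefix with more down than up steps. -/
lemma exists_eq_append_cons_D {T : List MStep} (h : T.count MStep.U < T.count MStep.D) :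
    ∃ Q S, IsMotzkin Q ∧ T = Q ++ MStep.D :: S := by
  have hex : ∃ j, (T.take j).count MStep.U < (T.take j).count MStep.D :=
    ⟨T.length, by simpa using h⟩
  have hmin : ∀ i < Nat.find hex, (T.take i).count MStep.D ≤ (T.take i).count MStep.U :=
    fun i hi => not_lt.1 (Nat.find_min hex hi)
  obtain ⟨k, hk⟩ : ∃ k, Nat.find hex = k + 1 :=
    Nat.exists_eq_succ_of_ne_zero fun h0 => by simpa [h0] using Nat.find_spec hex
  have hexceed := Nat.find_spec hex
  rw [hk] at hexceed hmin
  have hkT : k < T.length := by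
    by_contra! hle
    have := hmin k (by omega)
    rw [List.take_of_length_le hle] at this
    rw [List.take_of_length_le (by omega)] at hexceed
    omega
  have hbal := hmin k (by omega)
  rw [List.take_add_one, List.getElem?_eq_getElem hkT] at hexceed
  have hTk : T[k] = MStep.D := by
    rcases hx : T[k] with _ | _ | _ <;> simp [hx] at hexceed ⊢ <;> omega
  simp only [hTk, Option.toList_some, List.count_append, List.count_singleton_self,
    List.count_singleton, reduceCtorEq, beq_iff_eq, if_false] at hexceed
  refine ⟨T.take k, T.drop (k + 1), ⟨fun i hi => ?_, by omega⟩, ?_⟩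
  · rw [List.take_take, min_eq_left (hi.trans (List.length_take_le _ _))]
    exact hmin i (by rw [List.length_take] at hi; omega)
  · rw [← hTk, List.getElem_cons_drop, List.take_append_drop]

lemma exists_firstReturn {T : List MStep} (h : IsMotzkin (MStep.U :: T)) :
    ∃ Q S, IsMotzkin Q ∧ IsMotzkin S ∧ MStep.U :: T = firstReturn Q S := by
  have hbal := h.2
  simp only [List.count_cons_self, List.count_cons_of_ne, ne_eq, reduceCtorEq, not_false_eq_true] at hbal
  obtain ⟨Q, S, hQ, rfl⟩ := exists_eq_append_cons_D (T := T) (by omega)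
  exact ⟨Q, S, hQ, (isMotzkin_firstReturn_iff hQ).1 h, rfl⟩

end firstReturn

lemma motzkinSet_succ (n : ℕ) :
    motzkinSet (n + 1) =
      (motzkinSet n).image (MStep.H :: ·) ∪
        ((Finset.Icc 2 (n + 1)).sigma fun k => motzkinSet (k - 2) ×ˢ motzkinSet (n + 1 - k)).image
          fun x => firstReturn x.2.1 x.2.2 := by
  ext P
  simp only [Finset.mem_union, Finset.mem_image, Finset.mem_sigma, Finset.mem_product,
    Finset.mem_Icc, mem_motzkinSet]
  constructor
  · rintro ⟨hl, hP⟩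
    rcases P with _ | ⟨_ | _ | _, T⟩
    · simp at hl
    · obtain ⟨Q, S, hQ, hS, hT⟩ := exists_firstReturn hP
      have hlen := congrArg List.length hT
      simp only [List.length_cons, length_firstReturn] at hl hlen
      refine Or.inr ⟨⟨Q.length + 2, Q, S⟩, ?_, hT.symm⟩
      dsimp only
      exact ⟨⟨le_add_self, by omega⟩, ⟨rfl, hQ⟩, by omega, hS⟩
    · exact Or.inl ⟨T, ⟨by simpa using hl, isMotzkin_cons_H_iff.1 hP⟩, rfl⟩
    · exact absurd hP (not_isMotzkin_cons_D T)
  · rintro (⟨Q, ⟨hl, hQ⟩, rfl⟩ | ⟨⟨k, Q, S⟩, ⟨⟨hk2, hkn⟩, ⟨hQl, hQ⟩, hSl, hS⟩, rfl⟩)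
    · exact ⟨by simp [hl], isMotzkin_cons_H_iff.2 hQ⟩
    · exact ⟨by rw [length_firstReturn]; omega, (isMotzkin_firstReturn_iff hQ).2 hS⟩

section weight

variable {R : Type*} [CommSemiring R] (a b c d : R)

noncomputable def pathWeight (P : List MStep) : R :=
  a ^ horCount P * b ^ upCount P * c ^ shSum MStep.U P * d ^ shSum MStep.H P

lemma Ipoly_eq_sum_pathWeight (n : ℕ) :
    Ipoly n a b c d = ∑ P ∈ motzkinSet n, pathWeight a b c d P := rfl

lemma pathWeight_cons_H (Q : List MStep) :
    pathWeight a b c d (MStep.H :: Q) = a * pathWeight a b c d Q := by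
  simp only [pathWeight, horCount, upCount, shSum_cons_H, List.count_cons_self, List.count_cons_of_ne, ne_eq, reduceCtorEq, not_false_eq_true]
  ring

lemma pathWeight_firstReturn {Q : List MStep} (S : List MStep) (hQ : IsMotzkin Q) :
    pathWeight a b c d (firstReturn Q S) =
      b * pathWeight (a * d) (b * c) c d Q * pathWeight a b c d S := by
  simp only [pathWeight, horCount, upCount, shSum_firstReturn hQ (s := MStep.U) (by simp),
    shSum_firstReturn hQ (s := MStep.H) (by simp)]
  simp only [firstReturn, List.count_append, List.count_cons_self, List.count_cons_of_ne, ne_eq, reduceCtorEq, not_false_eq_true]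
  ring

lemma Ipoly_zero : Ipoly 0 a b c d = 1 := by
  simp [Ipoly_eq_sum_pathWeight, motzkinSet_zero, pathWeight, horCount, upCount, shSum]

lemma Ipoly_succ (n : ℕ) :
    Ipoly (n + 1) a b c d =
      a * Ipoly n a b c d +
        b * ∑ k ∈ Finset.Icc 2 (n + 1),
          Ipoly (k - 2) (a * d) (b * c) c d * Ipoly (n + 1 - k) a b c d := by
  rw [Ipoly_eq_sum_pathWeight, motzkinSet_succ, Finset.sum_union, Finset.sum_image,
    Finset.sum_image, Finset.sum_sigma, Ipoly_eq_sum_pathWeight, Finset.mul_sum, Finset.mul_sum]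
  · congr 1
    · exact Finset.sum_congr rfl fun Q _ => pathWeight_cons_H a b c d Q
    refine Finset.sum_congr rfl fun k _ => ?_
    rw [Ipoly_eq_sum_pathWeight, Ipoly_eq_sum_pathWeight, Finset.sum_mul_sum,
      ← Finset.sum_product', Finset.mul_sum]
    refine Finset.sum_congr rfl fun x hx => ?_
    rw [pathWeight_firstReturn a b c d _ (mem_motzkinSet.1 (Finset.mem_product.1 hx).1).2,
      mul_assoc]
  · rintro ⟨k, Q, S⟩ hx ⟨k', Q', S'⟩ hx' h
    simp only [Finset.coe_sigma, Set.mem_sigma_iff, Finset.coe_Icc, Set.mem_Icc,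
      Finset.coe_product, Set.mem_prod, Finset.mem_coe, mem_motzkinSet] at hx hx'
    obtain ⟨rfl, rfl⟩ := firstReturn_inj hx.2.1.2 hx'.2.1.2 h
    obtain rfl : k = k' := by omega
    rfl
  · exact fun _ _ _ _ h => List.cons_injective h
  · refine Finset.disjoint_left.2 fun P hH hU => ?_
    simp only [Finset.mem_image] at hH hU
    obtain ⟨Q, -, rfl⟩ := hH
    obtain ⟨x, -, hx⟩ := hU
    simp [firstReturn] at hx

end weight

/-- `I 0 a b c d = 1` and, for `n ≥ 1`,
`I n a b c d = a·I (n-1) a b c d + b·∑_{k=2}^{n} I (k-2) (ad) (bc) c d · I (n-k) a b c d`. -/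
theorem Ipoly_recurrence {R : Type*} [CommSemiring R] (a b c d : R) :
    Ipoly 0 a b c d = 1 ∧
      ∀ n, 1 ≤ n →
        Ipoly n a b c d =
          a * Ipoly (n - 1) a b c d +
            b * ∑ k ∈ Finset.Icc 2 n,
              Ipoly (k - 2) (a * d) (b * c) c d * Ipoly (n - k) a b c d := by
  refine ⟨Ipoly_zero a b c d, fun n hn => ?_⟩
  obtain ⟨m, rfl⟩ := Nat.exists_eq_add_of_le' hn
  rw [Ipoly_succ, Nat.add_sub_cancel]
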